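/- arXiv:2409.04305 — 2 statements merged into one kernel-verified Lean document; each statement's English description precedes it below -/
import Mathlib

section
/- Let t, u be arbitrary real numbers and (κ_{2ℓ})_{ℓ≥1} an arbitrary real sequence; set G(z) := Σ_{ℓ≥1} (κ_{2ℓ}/ℓ) z^{2ℓ} and g(z) := Σ_{ℓ≥1} κ_{2ℓ} z^{2ℓ−1} (so that G'(z)/2 = g(z)). Then for every formal power series h(z) ∈ ℝ[[z]]: ∂_{t,u}( h(z) e^{G(z)} ) = ((∂_{t,u} + *_g)(h(z))) · e^{G(z)} + ([z^0] h(z)) · d_{t,u}( e^{G(z)} ), where d_{t,u} is the unique linear operator on ℝ[[z]] with d_{t,u} z^{2m+1} = (u − 1/2) z^{2m} for m ≥ 0, d_{t,u} z^{2m} = t z^{2m−1} for m ≥ 1, and d_{t,u} 1 = 0. -/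
open Finset

/-- Formal exponential of a power series with zero constant term. -/
noncomputable def fexp (F : PowerSeries ℝ) : PowerSeries ℝ :=
  PowerSeries.mk fun n =>
    ∑ k ∈ Finset.range (n + 1), (PowerSeries.coeff (R := ℝ) n (F ^ k)) / (k.factorial : ℝ)

/-- The series `G(z) = Σ_{ℓ≥1} (κ_{2ℓ}/ℓ) z^{2ℓ}` (where `κ ℓ` stands for `κ_{2ℓ}`). -/
noncomputable def evenSeries (x : ℕ → ℝ) : PowerSeries ℝ :=
  PowerSeries.mk fun j => if j ≠ 0 ∧ j % 2 = 0 then x (j / 2) / ((j / 2 : ℕ) : ℝ) else 0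

/-- The operator `∂_{t,u}` on `ℝ[[z]]`: `∂ z^{2m+1} = (u+m) z^{2m}`, `∂ z^{2m} = (t+m) z^{2m-1}`,
`∂ 1 = 0`. -/
noncomputable def partialTU (t u : ℝ) (f : PowerSeries ℝ) : PowerSeries ℝ :=
  PowerSeries.mk fun j =>
    if j % 2 = 0 then (u + (j / 2 : ℕ)) * PowerSeries.coeff (R := ℝ) (j + 1) f
    else (t + ((j + 1) / 2 : ℕ)) * PowerSeries.coeff (R := ℝ) (j + 1) f

/-- The operator `d_{t,u}` on `ℝ[[z]]`: `d z^{2m+1} = (u - 1/2) z^{2m}`, `d z^{2m} = t z^{2m-1}`,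
`d 1 = 0`. -/
noncomputable def dTU (t u : ℝ) (f : PowerSeries ℝ) : PowerSeries ℝ :=
  PowerSeries.mk fun j =>
    if j % 2 = 0 then (u - 1 / 2) * PowerSeries.coeff (R := ℝ) (j + 1) f
    else t * PowerSeries.coeff (R := ℝ) (j + 1) f

/-- The series `g(z) = Σ_{ℓ≥1} κ_{2ℓ} z^{2ℓ-1}` (where `κ ℓ` stands for `κ_{2ℓ}`). -/
noncomputable def gSeries (κ : ℕ → ℝ) : PowerSeries ℝ :=
  PowerSeries.mk fun j => if j % 2 = 1 then κ ((j + 1) / 2) else 0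

/-! On `ℝ⟦X⟧` the operator `∂_{t,u}` splits as `½ d/dz + d_{t,u}`. The derivative is a derivation
and `d/dz e^G = G' e^G = 2 g e^G` by the chain rule for `exp ∘ G`, which accounts for `*_g`. The
parity-weighted shift `d_{t,u}` obeys `d(f F) = d(f) F + f(0) d(F)` as soon as `F` is even, and
`e^G` is even because `G` is. -/

open PowerSeries

theorem PowerSeries.coeff_pow_eq_zero_of_constantCoeff_eq_zero {R : Type*} [Semiring R]
    {F : R⟦X⟧} (hF : constantCoeff F = 0) {n k : ℕ} (hnk : n < k) : coeff n (F ^ k) = 0 :=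
  coeff_of_lt_order n ((Nat.cast_lt.mpr hnk).trans_le (le_order_pow_of_constantCoeff_eq_zero k hF))

theorem fexp_eq_subst_exp {F : ℝ⟦X⟧} (hF : constantCoeff F = 0) : fexp F = (exp ℝ).subst F := by
  ext n
  rw [fexp, coeff_mk, coeff_subst' (HasSubst.of_constantCoeff_zero' hF),
    finsum_eq_sum_of_support_subset (s := range (n + 1))]
  · refine sum_congr rfl fun k _ => ?_
    rw [coeff_exp, smul_eq_mul, map_div₀, map_one, map_natCast, one_div, inv_mul_eq_div]
  · intro k hk
    rw [Function.mem_support] at hk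
    by_contra hkn
    exact hk (by rw [coeff_pow_eq_zero_of_constantCoeff_eq_zero hF (by simpa using hkn), smul_zero])

theorem derivative_fexp {F : ℝ⟦X⟧} (hF : constantCoeff F = 0) :
    d⁄dX ℝ (fexp F) = d⁄dX ℝ F * fexp F := by
  rw [fexp_eq_subst_exp hF, derivative_subst (HasSubst.of_constantCoeff_zero' hF), derivative_exp,
    mul_comm]

namespace PowerSeries

variable {R : Type*} [Semiring R]

def IsEven (F : R⟦X⟧) : Prop := ∀ n, Odd n → coeff n F = 0

theorem IsEven.mul {F G : R⟦X⟧} (hF : F.IsEven) (hG : G.IsEven) : (F * G).IsEven := by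
  intro n hn
  rw [coeff_mul]
  refine sum_eq_zero fun p hp => ?_
  rw [HasAntidiagonal.mem_antidiagonal] at hp
  rcases Nat.even_or_odd p.1 with h1 | h1
  · rw [hG p.2 ((Nat.odd_add'.mp (hp ▸ hn)).mpr h1), mul_zero]
  · rw [hF p.1 h1, zero_mul]

theorem IsEven.pow {F : R⟦X⟧} (hF : F.IsEven) (k : ℕ) : (F ^ k).IsEven := by
  induction k with
  | zero => intro n hn; rw [pow_zero, coeff_one, if_neg (by rintro rfl; exact Nat.not_odd_zero hn)]
  | succ k ih => rw [pow_succ]; exact ih.mul hF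

end PowerSeries

theorem PowerSeries.IsEven.fexp {F : ℝ⟦X⟧} (hF : F.IsEven) : (fexp F).IsEven := fun n hn => by
  rw [_root_.fexp, coeff_mk]
  exact sum_eq_zero fun k _ => by rw [hF.pow k n hn, zero_div]

theorem isEven_evenSeries (κ : ℕ → ℝ) : (evenSeries κ).IsEven := fun n hn => by
  rw [evenSeries, coeff_mk, if_neg]
  rw [Nat.odd_iff] at hn
  omega

theorem coeff_dTU (t u : ℝ) (f : ℝ⟦X⟧) (n : ℕ) :
    coeff n (dTU t u f) = (if n % 2 = 0 then u - 1 / 2 else t) * coeff (n + 1) f := by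
  rw [dTU, coeff_mk]
  split_ifs <;> rfl

theorem dTU_mul_of_isEven (t u : ℝ) (f : ℝ⟦X⟧) {F : ℝ⟦X⟧} (hF : F.IsEven) :
    dTU t u (f * F) = dTU t u f * F + C (constantCoeff f) * dTU t u F := by
  ext n
  have hterm : ∀ p ∈ antidiagonal n, coeff p.1 (dTU t u f) * coeff p.2 F =
      (if n % 2 = 0 then u - 1 / 2 else t) * (coeff (p.1 + 1) f * coeff p.2 F) := by
    intro p hp
    rw [HasAntidiagonal.mem_antidiagonal] at hp
    rcases Nat.even_or_odd p.2 with h2 | h2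
    · rw [coeff_dTU, ← hp, Nat.add_mod, Nat.even_iff.mp h2, add_zero, Nat.mod_mod, mul_assoc]
    · rw [hF p.2 h2, mul_zero, mul_zero, mul_zero]
  rw [coeff_dTU, map_add, coeff_mul, coeff_C_mul, coeff_dTU, coeff_mul, Nat.sum_antidiagonal_succ,
    sum_congr rfl hterm, ← mul_sum, coeff_zero_eq_constantCoeff_apply]
  ring

theorem partialTU_eq_half_smul_derivative_add_dTU (t u : ℝ) (f : ℝ⟦X⟧) :
    partialTU t u f = (1 / 2 : ℝ) • d⁄dX ℝ f + dTU t u f := by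
  ext n
  rw [partialTU, coeff_mk, map_add, coeff_smul, coeff_derivative, coeff_dTU]
  obtain ⟨m, rfl | rfl⟩ := Nat.even_or_odd' n
  · rw [if_pos (by omega), if_pos (by omega), show 2 * m / 2 = m by omega]
    push_cast
    ring
  · rw [if_neg (by omega), if_neg (by omega), show (2 * m + 1 + 1) / 2 = m + 1 by omega]
    push_cast
    ring

theorem constantCoeff_evenSeries (κ : ℕ → ℝ) : constantCoeff (evenSeries κ) = 0 := by
  rw [← coeff_zero_eq_constantCoeff_apply, evenSeries, coeff_mk, if_neg (by simp)]

theorem derivative_evenSeries (κ : ℕ → ℝ) : d⁄dX ℝ (evenSeries κ) = (2 : ℝ) • gSeries κ := by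
  ext n
  rw [coeff_derivative, coeff_smul, gSeries, evenSeries, coeff_mk, coeff_mk]
  obtain ⟨m, rfl | rfl⟩ := Nat.even_or_odd' n
  · rw [if_neg (by omega), if_neg (by omega), zero_mul, smul_zero]
  · rw [if_pos (by omega), if_pos (by omega), show (2 * m + 1 + 1) / 2 = m + 1 by omega,
      smul_eq_mul]
    push_cast
    field_simp
    ring

/-- Claim 3.6: the modified Leibniz rule
`∂_{t,u}(h e^G) = ((∂_{t,u} + *_g) h) e^G + ([z^0]h) · d_{t,u}(e^G)`. -/
theorem partialTU_mul_fexp (t u : ℝ) (κ : ℕ → ℝ) (h : PowerSeries ℝ) :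
    partialTU t u (h * fexp (evenSeries κ)) =
      (partialTU t u h + gSeries κ * h) * fexp (evenSeries κ) +
        PowerSeries.C (R := ℝ) (PowerSeries.constantCoeff (R := ℝ) h) *
          dTU t u (fexp (evenSeries κ)) := by
  rw [partialTU_eq_half_smul_derivative_add_dTU, Derivation.leibniz,
    derivative_fexp (constantCoeff_evenSeries κ), derivative_evenSeries,
    dTU_mul_of_isEven t u h (isEven_evenSeries κ).fexp, partialTU_eq_half_smul_derivative_add_dTU]
  have half_mul_two : C (1 / 2 : ℝ) * C 2 = 1 := by rw [← map_mul]; norm_num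
  simp only [smul_eq_mul, smul_eq_C_mul]
  linear_combination h * gSeries κ * fexp (evenSeries κ) * half_mul_two
end

section
/- Let n ≥ 0 and d ≥ 1 be integers, and let T be the linear operator on ℝ[x] determined by T x^i = i(i+n) x^{i−1} for i ≥ 0 (i.e., T f = x^{−n}·(x^{n+1} f′)′, which maps polynomials to polynomials and lowers degree by 1). Then: (i) T^k x^i = (−i)_k (−i−n)_k x^{i−k} for all 0 ≤ k ≤ i; and (ii) if p(x) = x^d + Σ_{k=1}^d a_{2k} x^{d−k} and r(x) = x^d + Σ_{k=1}^d b_{2k} x^{d−k} are monic of degree d, and P(y) := Σ_{k=0}^d (a_{2k}/((−d)_k(−d−n)_k)) y^k and R(y) := Σ_{k=0}^d (b_{2k}/((−d)_k(−d−n)_k)) y^k (with a_0 = b_0 := 1), so that p = P(T) x^d and r = R(T) x^d, then (p ⊞^n_d r)(x) = P(T) R(T) x^d = P(T) r(x) = R(T) p(x). -/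
open Finset Polynomial

/-- Pochhammer symbol `(v)_k = v (v+1) ⋯ (v+k-1)`. -/
noncomputable def pochEval (v : ℝ) (k : ℕ) : ℝ := (ascPochhammer ℝ k).eval v

/-- The operator `T = x^{-n} D x^{n+1} D` on `ℝ[x]`, determined by
`T x^i = i (i+n) x^{i-1}` for all `i ≥ 0`. -/
noncomputable def Trect (n : ℕ) (p : Polynomial ℝ) : Polynomial ℝ :=
  ∑ i ∈ Finset.range (p.natDegree + 1),
    Polynomial.C (p.coeff i * (i : ℝ) * ((i : ℝ) + (n : ℝ))) * Polynomial.X ^ (i - 1)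

/-- The monic polynomial `x^d + Σ_{k=1}^d a_{2k} x^{d-k}` (where `a k` stands for `a_{2k}`). -/
noncomputable def monicFromCoeffs (d : ℕ) (a : ℕ → ℝ) : Polynomial ℝ :=
  Polynomial.X ^ d + ∑ k ∈ Finset.Icc 1 d, Polynomial.C (a k) * Polynomial.X ^ (d - k)

/-- The operator `P(T)` where `P(y) = Σ_{k=0}^d (a_{2k}/((-d)_k (-d-n)_k)) y^k`, `a_0 = 1`. -/
noncomputable def applyPT (n d : ℕ) (a : ℕ → ℝ) (q : Polynomial ℝ) : Polynomial ℝ :=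
  ∑ k ∈ Finset.range (d + 1),
    Polynomial.C ((if k = 0 then 1 else a k) /
        (pochEval (-(d : ℝ)) k * pochEval (-(d : ℝ) - (n : ℝ)) k)) * (Trect n)^[k] q

/-- The coefficient sequence of the `(n,d)`-rectangular convolution `p ⊞^n_d r`. -/
noncomputable def rectConvCoeff (n d : ℕ) (a b : ℕ → ℝ) (k : ℕ) : ℝ :=
  ∑ i ∈ Finset.range (k + 1),
    (((d - i).factorial : ℝ) * ((d - (k - i)).factorial : ℝ) /
        ((d.factorial : ℝ) * ((d - k).factorial : ℝ))) *
      (((n + d - i).factorial : ℝ) * ((n + d - (k - i)).factorial : ℝ) /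
        (((n + d).factorial : ℝ) * ((n + d - k).factorial : ℝ))) *
      ((if i = 0 then 1 else a i) * (if k - i = 0 then 1 else b (k - i)))

/-! On monomials `T x^i = i (i + n) x^(i-1)`, so `T^k x^(d-j) = (-(d-j))_k (-(d-j)-n)_k x^(d-j-k)`,
which vanishes as soon as `k > d - j`. Hence `P(T) r` is a double sum over `k + j ≤ d`. Since
`(-N)_k = (-1)^k N!/(N-k)!`, the ratio `(-(d-j))_k (-(d-j)-n)_k / ((-d)_k (-d-n)_k)` is exactly the
factorial weight of `⊞^n_d` at `(k, j)`, so collecting the terms with `k + j = m` gives the `m`-th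
coefficient of `p ⊞^n_d r`. The case `r = x^d` gives `p = P(T) x^d`, and the weights are symmetric
in `(k, j)`, which gives `R(T) p`. -/

lemma pochEval_succ (v : ℝ) (k : ℕ) : pochEval v (k + 1) = pochEval v k * (v + k) := by
  rw [pochEval, pochEval, ascPochhammer_succ_eval]

lemma pochEval_neg_natCast (m k : ℕ) :
    pochEval (-(m : ℝ)) k = (-1) ^ k * m.descFactorial k := by
  rw [pochEval, ascPochhammer_eval_neg_eq_descPochhammer, descPochhammer_eval_eq_descFactorial]

lemma pochEval_neg_natCast_ne_zero {m k : ℕ} (h : k ≤ m) : pochEval (-(m : ℝ)) k ≠ 0 := by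
  rw [pochEval_neg_natCast]
  exact mul_ne_zero (pow_ne_zero _ (by norm_num))
    (Nat.cast_ne_zero.2 (Nat.descFactorial_eq_zero_iff_lt.not.2 (not_lt.2 h)))

lemma neg_natCast_sub_natCast (m n : ℕ) : -(m : ℝ) - n = -((n + m : ℕ) : ℝ) := by
  push_cast; ring

noncomputable def trectLinear (n : ℕ) : Module.End ℝ ℝ[X] :=
  lsum fun i => ((i : ℝ) * (i + n)) • monomial (i - 1)

lemma coe_trectLinear (n : ℕ) : ⇑(trectLinear n) = Trect n := by
  funext p
  rw [trectLinear, lsum_apply, Trect, sum_over_range _ fun i => by simp]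
  refine Finset.sum_congr rfl fun i _ => ?_
  rw [LinearMap.smul_apply, smul_monomial, C_mul_X_pow_eq_monomial, smul_eq_mul, mul_comm,
    mul_assoc]

lemma iterate_Trect (n k : ℕ) : (Trect n)^[k] = ⇑(trectLinear n ^ k) := by
  rw [Module.End.coe_pow, coe_trectLinear]

lemma Trect_C_mul (n : ℕ) (c : ℝ) (p : ℝ[X]) : Trect n (C c * p) = C c * Trect n p := by
  simp only [C_mul', ← coe_trectLinear, map_smul]

lemma Trect_iterate_C_mul (n k : ℕ) (c : ℝ) (p : ℝ[X]) :
    (Trect n)^[k] (C c * p) = C c * (Trect n)^[k] p := by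
  simp only [iterate_Trect, C_mul', map_smul]

lemma Trect_X_pow (n i : ℕ) :
    Trect n (X ^ i : ℝ[X]) = C ((i : ℝ) * (i + n)) * X ^ (i - 1) := by
  rw [← coe_trectLinear, trectLinear, X_pow_eq_monomial, lsum_apply,
    sum_monomial_index _ _ (by simp), LinearMap.smul_apply, smul_monomial,
    C_mul_X_pow_eq_monomial, smul_eq_mul, mul_one]

lemma Trect_iterate_X_pow (n i k : ℕ) :
    (Trect n)^[k] (X ^ i : ℝ[X]) =
      C (pochEval (-(i : ℝ)) k * pochEval (-(i : ℝ) - n) k) * X ^ (i - k) := by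
  induction k with
  | zero => simp [pochEval]
  | succ k ih =>
    rw [Function.iterate_succ_apply', ih, Trect_C_mul, Trect_X_pow, ← mul_assoc, ← C_mul,
      Nat.sub_sub, pochEval_succ, pochEval_succ]
    congr 2
    rcases le_or_gt k i with hki | hik
    · push_cast [Nat.cast_sub hki]
      ring
    · simp [pochEval_neg_natCast, Nat.descFactorial_eq_zero_iff_lt.2 hik]

lemma descFactorial_sub_div_descFactorial {N j k : ℕ} (h : k + j ≤ N) :
    ((N - j).descFactorial k : ℝ) / N.descFactorial k =
      ((N - k).factorial : ℝ) * (N - j).factorial / (N.factorial * (N - (k + j)).factorial) := by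
  have hj := Nat.factorial_mul_descFactorial (show k ≤ N - j by omega)
  have h0 := Nat.factorial_mul_descFactorial (show k ≤ N by omega)
  rw [Nat.sub_sub, add_comm j k] at hj
  rw [← hj, ← h0]
  push_cast
  have := Nat.factorial_ne_zero (N - k)
  have := Nat.factorial_ne_zero (N - (k + j))
  field_simp

lemma pochEval_ratio_eq_factorial_weight (n d j k : ℕ) (h : k + j ≤ d) :
    pochEval (-((d - j : ℕ) : ℝ)) k * pochEval (-((d - j : ℕ) : ℝ) - n) k /
        (pochEval (-(d : ℝ)) k * pochEval (-(d : ℝ) - n) k) =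
      ((d - k).factorial : ℝ) * (d - j).factorial / (d.factorial * (d - (k + j)).factorial) *
        (((n + d - k).factorial : ℝ) * (n + d - j).factorial /
          ((n + d).factorial * (n + d - (k + j)).factorial)) := by
  simp only [neg_natCast_sub_natCast, pochEval_neg_natCast, mul_div_mul_comm,
    mul_div_mul_left _ _ (pow_ne_zero k (by norm_num : (-1 : ℝ) ≠ 0))]
  rw [← Nat.add_sub_assoc (by omega), descFactorial_sub_div_descFactorial h,
    descFactorial_sub_div_descFactorial (by omega)]
  ring

lemma monicFromCoeffs_eq_sum (d : ℕ) (a : ℕ → ℝ) :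
    monicFromCoeffs d a = ∑ k ∈ range (d + 1), C (if k = 0 then 1 else a k) * X ^ (d - k) := by
  rw [monicFromCoeffs, Finset.range_eq_Ico, Finset.sum_eq_sum_Ico_succ_bot (by omega), zero_add,
    Finset.Ico_add_one_right_eq_Icc, if_pos rfl, C_1, one_mul, Nat.sub_zero]
  refine congrArg _ (Finset.sum_congr rfl fun k hk => ?_)
  rw [if_neg (by simp at hk; omega)]

lemma applyPT_X_pow (n d : ℕ) (a : ℕ → ℝ) : applyPT n d a (X ^ d) = monicFromCoeffs d a := by
  rw [applyPT, monicFromCoeffs_eq_sum]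
  refine Finset.sum_congr rfl fun k hk => ?_
  have hkd : k ≤ d := by simp at hk; omega
  rw [Trect_iterate_X_pow, ← mul_assoc, ← C_mul, div_mul_cancel₀]
  rw [neg_natCast_sub_natCast]
  exact mul_ne_zero (pochEval_neg_natCast_ne_zero hkd) (pochEval_neg_natCast_ne_zero (by omega))

lemma rectConvCoeff_zero (n d : ℕ) (a b : ℕ → ℝ) : rectConvCoeff n d a b 0 = 1 := by
  simp [rectConvCoeff, Nat.factorial_ne_zero]

lemma rectConvCoeff_comm (n d : ℕ) (a b : ℕ → ℝ) :
    rectConvCoeff n d a b = rectConvCoeff n d b a := by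
  funext k
  rw [rectConvCoeff, ← Finset.sum_range_reflect]
  refine Finset.sum_congr rfl fun i hi => ?_
  have hik : i ≤ k := by simp at hi; omega
  rw [Nat.add_sub_cancel, Nat.sub_sub_self hik]
  ring

lemma applyPT_monicFromCoeffs (n d : ℕ) (a b : ℕ → ℝ) :
    applyPT n d a (monicFromCoeffs d b) = monicFromCoeffs d (rectConvCoeff n d a b) := by
  set f : ℕ → ℕ → ℝ[X] := fun k j =>
    C ((if k = 0 then 1 else a k) / (pochEval (-(d : ℝ)) k * pochEval (-(d : ℝ) - n) k) *
      (if j = 0 then 1 else b j) *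
      (pochEval (-((d - j : ℕ) : ℝ)) k * pochEval (-((d - j : ℕ) : ℝ) - n) k)) *
      X ^ (d - j - k) with hf
  have hf_eq_zero : ∀ k j, d - j < k → f k j = 0 := fun k j h => by
    simp [hf, pochEval_neg_natCast, Nat.descFactorial_eq_zero_iff_lt.2 h]
  have expand : applyPT n d a (monicFromCoeffs d b) =
      ∑ k ∈ range (d + 1), ∑ j ∈ range (d + 1 - k), f k j := by
    rw [applyPT, monicFromCoeffs_eq_sum]
    refine Finset.sum_congr rfl fun k _ => ?_
    rw [iterate_Trect, map_sum, Finset.mul_sum, ← iterate_Trect]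
    have htrunc : ∑ j ∈ range (d + 1 - k), f k j = ∑ j ∈ range (d + 1), f k j :=
      Finset.sum_subset (Finset.range_subset_range.2 (Nat.sub_le _ _)) fun j hj hj' =>
        hf_eq_zero k j (by simp at hj hj'; omega)
    rw [htrunc]
    refine Finset.sum_congr rfl fun j _ => ?_
    rw [Trect_iterate_C_mul, Trect_iterate_X_pow]
    simp only [hf, C_mul]
    ring
  rw [expand, ← Finset.sum_range_diag_flip, monicFromCoeffs_eq_sum]
  refine Finset.sum_congr rfl fun m hm => ?_
  have hm0 : (if m = 0 then 1 else rectConvCoeff n d a b m) = rectConvCoeff n d a b m := by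
    rcases eq_or_ne m 0 with rfl | hm
    · rw [if_pos rfl, rectConvCoeff_zero]
    · rw [if_neg hm]
  rw [hm0, rectConvCoeff, map_sum, Finset.sum_mul]
  refine Finset.sum_congr rfl fun k hk => ?_
  have hkm : k ≤ m := by simp at hk; omega
  have hmd : m ≤ d := by simp at hm; omega
  have hratio := pochEval_ratio_eq_factorial_weight n d (m - k) k (by omega)
  rw [Nat.add_sub_cancel' hkm] at hratio
  simp only [hf]
  rw [show d - (m - k) - k = d - m by omega, ← hratio]
  congr 2
  ring

theorem rectangular_convolution_operator_general (n d : ℕ) (a b : ℕ → ℝ) :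
    (∀ i k : ℕ, k ≤ i →
      (Trect n)^[k] (Polynomial.X ^ i) =
        Polynomial.C (pochEval (-(i : ℝ)) k * pochEval (-(i : ℝ) - (n : ℝ)) k) *
          Polynomial.X ^ (i - k)) ∧
    monicFromCoeffs d a = applyPT n d a (Polynomial.X ^ d) ∧
    monicFromCoeffs d b = applyPT n d b (Polynomial.X ^ d) ∧
    monicFromCoeffs d (rectConvCoeff n d a b) =
      applyPT n d a (applyPT n d b (Polynomial.X ^ d)) ∧
    monicFromCoeffs d (rectConvCoeff n d a b) = applyPT n d a (monicFromCoeffs d b) ∧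
    monicFromCoeffs d (rectConvCoeff n d a b) = applyPT n d b (monicFromCoeffs d a) := by
  refine ⟨fun i k _ => Trect_iterate_X_pow n i k, (applyPT_X_pow n d a).symm,
    (applyPT_X_pow n d b).symm, ?_, (applyPT_monicFromCoeffs n d a b).symm, ?_⟩
  · rw [applyPT_X_pow, applyPT_monicFromCoeffs]
  · rw [rectConvCoeff_comm, applyPT_monicFromCoeffs]

/-- Eqns. (5.7)–(5.9): (i) `T^k x^i = (-i)_k (-i-n)_k x^{i-k}` for `k ≤ i`; and
(ii) writing `p = P(T) x^d` and `r = R(T) x^d` for monic `p, r` of degree `d`, the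
`(n,d)`-rectangular convolution is `p ⊞^n_d r = P(T) R(T) x^d = P(T) r = R(T) p`. -/
theorem rectangular_convolution_operator (n d : ℕ) (hd : 1 ≤ d) (a b : ℕ → ℝ) :
    (∀ i k : ℕ, k ≤ i →
      (Trect n)^[k] (Polynomial.X ^ i) =
        Polynomial.C (pochEval (-(i : ℝ)) k * pochEval (-(i : ℝ) - (n : ℝ)) k) *
          Polynomial.X ^ (i - k)) ∧
    monicFromCoeffs d a = applyPT n d a (Polynomial.X ^ d) ∧
    monicFromCoeffs d b = applyPT n d b (Polynomial.X ^ d) ∧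
    monicFromCoeffs d (rectConvCoeff n d a b) =
      applyPT n d a (applyPT n d b (Polynomial.X ^ d)) ∧
    monicFromCoeffs d (rectConvCoeff n d a b) = applyPT n d a (monicFromCoeffs d b) ∧
    monicFromCoeffs d (rectConvCoeff n d a b) = applyPT n d b (monicFromCoeffs d a) :=
  rectangular_convolution_operator_general n d a b
end
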